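/- Let f : U → V be a map in the set-up such that each connected component of V contains at most one critical point of f, and assume (∗∗). Let c be a critical point such that K_f(c) is a periodic component of K_f of period p. Then: (1) for every critical point c′ ∈ Forw(c) and every i ≥ 0, the component f^i(K_f(c′)) belongs to the cycle {K_f(c), f(K_f(c)), …, f^{p−1}(K_f(c))}; (2) every critical point in Forw(c) belongs to the class [c]; (3) c → c and c is persistently recurrent. -/

import Mathlib

/-!
Since `K_f(c)` is periodic, each orbit point `f^j(c)` lies in one of the compact sets
`f^r(K_f(c))`, `r < p`, and each of them is a component of `K_f`: as `f` is open and proper,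
`f` maps `P_{n+1}(x)` onto `P_n(f x)`, and `K_f(x) = ⋂ P_n(x)`. If `c → c'`, one residue `r`
recurs among the times of the returns to the shrinking pieces `P_n(c')`, so
`K_f(c') = f^r(K_f(c))`. This gives (1), and `f^{p-r}` carries `c'` back into
`K_f(c) ⊆ P_n(c)`, which gives (2) and `c → c`. For (3), a child `P_{n+k}(c₁)` with `k > p`
would make `f` injective on a puzzle piece around the critical point `c`; so the children of
a piece are among the finitely many `P_{n+k}(c₁)` with `c₁` critical and `k ≤ p`.
-/

open Set Function Topology

noncomputable section

/-- A (bounded) Jordan domain in the plane: a bounded connected open set whose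
frontier is a Jordan curve, i.e. an injective continuous image of the circle. -/
def IsJordanDomain (Ω : Set ℂ) : Prop :=
  IsOpen Ω ∧ IsConnected Ω ∧ Bornology.IsBounded Ω ∧
  ∃ g : Metric.sphere (0:ℂ) 1 → ℂ, Continuous g ∧ Function.Injective g ∧
    Set.range g = frontier Ω

/-- `A` is strictly contained in `X`: it is a proper subset of some connected
component of `X`. -/
def StrictlyContainedIn (A X : Set ℂ) : Prop :=
  ∃ x ∈ X, A ⊂ connectedComponentIn X x

/-- The set-up: `V ⊆ ℂ` is open with finitely many components, each a bounded Jordan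
domain, with pairwise disjoint closures; `U` is open with closure contained in `V`,
with finitely many components with pairwise disjoint closures; `f : U → V` is proper
holomorphic; every critical point of `f` lies in `K_f`. -/
structure Setup where
  U : Set ℂ
  V : Set ℂ
  f : ℂ → ℂ
  hV_open : IsOpen V
  hV_comp_finite : {C : Set ℂ | ∃ x ∈ V, C = connectedComponentIn V x}.Finite
  hV_jordan : ∀ x ∈ V, IsJordanDomain (connectedComponentIn V x)
  hV_disj : ∀ x ∈ V, ∀ y ∈ V, connectedComponentIn V x ≠ connectedComponentIn V y →
    closure (connectedComponentIn V x) ∩ closure (connectedComponentIn V y) = ∅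
  hU_open : IsOpen U
  hUV : closure U ⊆ V
  hU_comp_finite : {C : Set ℂ | ∃ x ∈ U, C = connectedComponentIn U x}.Finite
  hU_disj : ∀ x ∈ U, ∀ y ∈ U, connectedComponentIn U x ≠ connectedComponentIn U y →
    closure (connectedComponentIn U x) ∩ closure (connectedComponentIn U y) = ∅
  hf_maps : Set.MapsTo f U V
  hf_holo : DifferentiableOn ℂ f U
  hf_proper : ∀ K ⊆ V, IsCompact K → IsCompact (U ∩ f ⁻¹' K)
  hf_crit : ∀ z ∈ U, deriv f z = 0 → ∀ n : ℕ, f^[n] z ∈ U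

namespace Setup

variable (S : Setup)

/-- `K_f = {z ∈ U : f^n(z) ∈ U for all n}`. -/
def K : Set ℂ := {z | z ∈ S.U ∧ ∀ n : ℕ, S.f^[n] z ∈ S.U}

/-- The set of critical points of `f`. -/
def Crit : Set ℂ := {z | z ∈ S.U ∧ deriv S.f z = 0}

/-- `preV n = f^{-n}(V)`, preimages being taken for the partial map `f : U → V`. -/
def preV : ℕ → Set ℂ
  | 0 => S.V
  | n+1 => S.U ∩ S.f ⁻¹' (preV n)

/-- `P` is a puzzle piece of depth `n`: a connected component of `f^{-n}(V)`. -/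
def IsPieceOfDepth (n : ℕ) (P : Set ℂ) : Prop :=
  ∃ x ∈ S.preV n, P = connectedComponentIn (S.preV n) x

/-- `P` is a puzzle piece. -/
def IsPiece (P : Set ℂ) : Prop := ∃ n, S.IsPieceOfDepth n P

/-- `piece n x = P_n(x)`, the puzzle piece of depth `n` containing `x`. -/
def piece (n : ℕ) (x : ℂ) : Set ℂ := connectedComponentIn (S.preV n) x

/-- `X` is a finite union of puzzle pieces. -/
def IsPieceUnion (X : Set ℂ) : Prop :=
  ∃ P : Set (Set ℂ), P.Finite ∧ (∀ Q ∈ P, S.IsPiece Q) ∧ X = ⋃₀ P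

/-- `X` is nice: for every connected component `P` of `X` and every `n ≥ 1`,
`f^n(P)` is not strictly contained in `X`. -/
def Nice (X : Set ℂ) : Prop :=
  ∀ x ∈ X, ∀ n : ℕ, 1 ≤ n →
    ¬ StrictlyContainedIn (S.f^[n] '' connectedComponentIn X x) X

/-- `preIm X n = f^{-n}(X)`, preimages being taken for the partial map `f : U → V`. -/
def preIm (X : Set ℂ) : ℕ → Set ℂ
  | 0 => X
  | n+1 => S.U ∩ S.f ⁻¹' (preIm X n)

/-- `D(X) = ⋃_{k ≥ 0} f^{-k}(X)`. -/
def D (X : Set ℂ) : Set ℂ := ⋃ k, S.preIm X k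

/-- For `z ∈ D(X) ∖ X`, `k` is the landing time `k(z)`: the minimal positive
integer with `f^k(z) ∈ X`. -/
def IsLandingTime (X : Set ℂ) (z : ℂ) (k : ℕ) : Prop :=
  1 ≤ k ∧ S.f^[k] z ∈ X ∧ ∀ j, 1 ≤ j → j < k → S.f^[j] z ∉ X

/-- `landComp X z k = Comp_z(f^{-k}(Comp_{f^k(z)}(X)))`; for `k = k(z)` this is
`L_z(X)`. -/
def landComp (X : Set ℂ) (z : ℂ) (k : ℕ) : Set ℂ :=
  connectedComponentIn (S.preIm (connectedComponentIn X (S.f^[k] z)) k) z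

/-- `x` combinatorially accumulates to `y`: for every `n ≥ 0` there is `j ≥ 1`
with `f^j(x) ∈ P_n(y)`. -/
def Acc (x y : ℂ) : Prop := ∀ n : ℕ, ∃ j : ℕ, 1 ≤ j ∧ S.f^[j] x ∈ S.piece n y

/-- `Forw(x) = {y ∈ K_f : x → y}`. -/
def Forw (x : ℂ) : Set ℂ := {y | y ∈ S.K ∧ S.Acc x y}

/-- The equivalence `c1 ∼ c2` on critical points. -/
def Equiv (c1 c2 : ℂ) : Prop := c1 = c2 ∨ (S.Acc c1 c2 ∧ S.Acc c2 c1)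

/-- The class `[c]` of a critical point `c`. -/
def cls (c : ℂ) : Set ℂ := {c' | c' ∈ S.Crit ∧ S.Equiv c c'}

/-- `D(f) = Crit(f)/∼`, the set of equivalence classes. -/
def classes : Set (Set ℂ) := {A | ∃ c ∈ S.Crit, A = S.cls c}

/-- `[c1] → [c2]`. -/
def ClassAcc (A B : Set ℂ) : Prop := ∃ c1 ∈ A, ∃ c2 ∈ B, S.Acc c1 c2

/-- The partial order on classes: `A ≤ B` iff `A = B` or `B → A`. -/
def ClassLe (A B : Set ℂ) : Prop := A = B ∨ S.ClassAcc B A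

/-- The minimal elements of a family of classes w.r.t. `ClassLe`. -/
def minimalsIn (T : Set (Set ℂ)) : Set (Set ℂ) :=
  {A | A ∈ T ∧ ∀ B ∈ T, S.ClassLe B A → B = A}

/-- Auxiliary: `(D_k(f), D_0(f) ∪ ⋯ ∪ D_k(f))`. -/
def DlevelAux : ℕ → Set (Set ℂ) × Set (Set ℂ)
  | 0 => (S.minimalsIn S.classes, S.minimalsIn S.classes)
  | k+1 =>
      (S.minimalsIn (S.classes \ (DlevelAux k).2),
        (DlevelAux k).2 ∪ S.minimalsIn (S.classes \ (DlevelAux k).2))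

/-- `Dlevel k = D_k(f)`. -/
def Dlevel (k : ℕ) : Set (Set ℂ) := (S.DlevelAux k).1

/-- Each connected component of `V` contains at most one critical point. -/
def OneCritPerComp : Prop :=
  ∀ c ∈ S.Crit, ∀ c' ∈ S.Crit,
    connectedComponentIn S.V c = connectedComponentIn S.V c' → c = c'

/-- Assumption (∗∗): if `c` does not combinatorially accumulate to `c'`, then
`f^j(c) ∉ P_0(c')` for all `j ≥ 1`. -/
def StarStar : Prop :=
  ∀ c ∈ S.Crit, ∀ c' ∈ S.Crit, ¬ S.Acc c c' →
    ∀ j : ℕ, 1 ≤ j → S.f^[j] c ∉ S.piece 0 c'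

/-- `K_f(x)`, the connected component of `K_f` containing `x`. -/
def Kcomp (x : ℂ) : Set ℂ := connectedComponentIn S.K x

/-- `P_{n+k}(c1)` is a child of `P_n(c2)`: `f^k(P_{n+k}(c1)) = P_n(c2)` and
`f^{k-1}` maps `P_{n+k-1}(f(c1))` conformally onto `P_n(c2)`. -/
def IsChild (c1 : ℂ) (k : ℕ) (n : ℕ) (c2 : ℂ) : Prop :=
  1 ≤ k ∧ S.f^[k] '' S.piece (n+k) c1 = S.piece n c2 ∧
  Set.InjOn (S.f^[k-1]) (S.piece (n+k-1) (S.f c1)) ∧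
  S.f^[k-1] '' S.piece (n+k-1) (S.f c1) = S.piece n c2

/-- `c` is persistently recurrent: for every `n ≥ 0` and every `c' ∈ [c]`,
`P_n(c')` has only finitely many children. -/
def PersistentlyRecurrent (c : ℂ) : Prop :=
  ∀ n : ℕ, ∀ c' ∈ S.cls c,
    {Q : Set ℂ | ∃ c1 ∈ S.cls c, ∃ k : ℕ, S.IsChild c1 k n c' ∧
      Q = S.piece (n+k) c1}.Finite

/-- `Crit_n(f)`. -/
def CritN : Set ℂ := {c | c ∈ S.Crit ∧ ∀ c' ∈ S.Crit, ¬ S.Acc c c'}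

/-- `Crit_e(f)`. -/
def CritE : Set ℂ := {c | c ∈ S.Crit ∧ ¬ S.Acc c c ∧ ∃ c' ∈ S.Crit, S.Acc c c'}

/-- `Crit_r(f)`. -/
def CritR : Set ℂ := {c | c ∈ S.Crit ∧ S.Acc c c ∧ ¬ S.PersistentlyRecurrent c}

/-- `Crit_p(f)`. -/
def CritP : Set ℂ := {c | c ∈ S.Crit ∧ S.Acc c c ∧ S.PersistentlyRecurrent c}

end Setup

open Filter

section Topology

variable {X Y : Type*} [TopologicalSpace X] [TopologicalSpace Y]

lemma IsOpen.mem_connectedComponentIn_of_mem_closure [LocallyConnectedSpace X] {s : Set X}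
    (hs : IsOpen s) {x w : X} (hw : w ∈ closure (connectedComponentIn s x)) (hws : w ∈ s) :
    w ∈ connectedComponentIn s x := by
  obtain ⟨y, hyw, hyx⟩ :=
    mem_closure_iff.1 hw _ hs.connectedComponentIn (mem_connectedComponentIn hws)
  rw [connectedComponentIn_eq hyx, ← connectedComponentIn_eq hyw]
  exact mem_connectedComponentIn hws

variable [T2Space X] {E : ℕ → Set X}

lemma isPreconnected_iInter_of_antitone (hE : Antitone E) (hc : ∀ n, IsCompact (E n))
    (hconn : ∀ n, IsPreconnected (E n)) : IsPreconnected (⋂ n, E n) := by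
  have hA : IsCompact (⋂ n, E n) :=
    (hc 0).of_isClosed_subset (isClosed_iInter fun n => (hc n).isClosed) (iInter_subset _ 0)
  rw [isPreconnected_closed_iff]
  intro s t hs ht hst ⟨a, haE, has⟩ ⟨b, hbE, hbt⟩
  by_contra hdisj
  obtain ⟨u, v, hu, hv, hsu, htv, huv⟩ := SeparatedNhds.of_isCompact_isCompact
    (hA.inter_right hs) (hA.inter_right ht)
    (disjoint_left.2 fun x hxs hxt => hdisj ⟨x, hxs.1, hxs.2, hxt.2⟩)
  obtain ⟨N, hN⟩ := exists_subset_nhds_of_isCompact hE.directed_ge hc fun x hx =>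
    (hu.union hv).mem_nhds ((hst hx).imp (fun h => hsu ⟨hx, h⟩) fun h => htv ⟨hx, h⟩)
  obtain ⟨x, -, hxu, hxv⟩ := hconn N u v hu hv hN
    ⟨a, mem_iInter.1 haE N, hsu ⟨haE, has⟩⟩ ⟨b, mem_iInter.1 hbE N, htv ⟨hbE, hbt⟩⟩
  exact disjoint_left.1 huv hxu hxv

lemma ContinuousOn.image_iInter_of_antitone [T1Space Y] {g : X → Y} (hE : Antitone E)
    (hc : ∀ n, IsCompact (E n)) (hg : ContinuousOn g (E 0)) :
    g '' ⋂ n, E n = ⋂ n, g '' E n := by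
  refine (image_iInter_subset _ _).antisymm fun y hy => ?_
  have hF : ∀ n, IsClosed (E n ∩ g ⁻¹' {y}) := fun n =>
    (hg.mono (hE (Nat.zero_le n))).preimage_isClosed_of_isClosed (hc n).isClosed isClosed_singleton
  obtain ⟨x, hx⟩ := IsCompact.nonempty_iInter_of_sequence_nonempty_isCompact_isClosed
    (fun n => E n ∩ g ⁻¹' {y}) (fun n => inter_subset_inter_left _ (hE n.le_succ))
    (fun n => (mem_iInter.1 hy n).imp fun _ ⟨hx, hxy⟩ => ⟨hx, hxy⟩)
    ((hc 0).of_isClosed_subset (hF 0) inter_subset_left) hF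
  simp only [mem_iInter, mem_inter_iff, mem_preimage, mem_singleton_iff] at hx
  exact ⟨x, mem_iInter.2 fun n => (hx n).1, (hx 0).2⟩

end Topology

lemma image_iterate_sub_of_isPeriodicPt {α : Type*} {g : α → α} {A : Set α} {p r : ℕ}
    (hper : IsPeriodicPt (image g) p A) (hr : r ≤ p) : g^[p - r] '' (g^[r] '' A) = A := by
  rw [← image_comp, ← iterate_add, Nat.sub_add_cancel hr, image_iterate_eq]
  exact hper

lemma image_iterate_mod_of_isPeriodicPt {α : Type*} {g : α → α} {A : Set α} {p : ℕ}
    (hper : IsPeriodicPt (image g) p A) (n : ℕ) : g^[n % p] '' A = g^[n] '' A := by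
  simpa only [image_iterate_eq] using hper.iterate_mod_apply n

lemma AnalyticAt.eventually_eq_of_eventually_deriv_eq_zero {f : ℂ → ℂ} {z : ℂ}
    (hf : AnalyticAt ℂ f z) (hd : ∀ᶠ w in 𝓝 z, deriv f w = 0) : ∀ᶠ w in 𝓝 z, f w = f z := by
  have htop : analyticOrderAt (f · - f z) z = ⊤ := by
    rw [← hf.analyticOrderAt_deriv_add_one, analyticOrderAt_eq_top.2 hd, top_add]
  filter_upwards [analyticOrderAt_eq_top.1 htop] with w hw using sub_eq_zero.1 hw

lemma AnalyticAt.exists_eventually_pow_eq {h : ℂ → ℂ} {c : ℂ} (hh : AnalyticAt ℂ h c)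
    (hc : h c ≠ 0) {d : ℕ} (hd : d ≠ 0) :
    ∃ φ : ℂ → ℂ, AnalyticAt ℂ φ c ∧ φ c ≠ 0 ∧ ∀ᶠ z in 𝓝 c, φ z ^ d = h z := by
  obtain ⟨w, hw⟩ := IsAlgClosed.exists_pow_nat_eq (h c) (Nat.pos_of_ne_zero hd)
  have hw0 : w ≠ 0 := by rintro rfl; exact hc (by rw [← hw, zero_pow hd])
  have hd' : (d : ℂ) ≠ 0 := Nat.cast_ne_zero.2 hd
  refine ⟨fun z => w * Complex.exp (Complex.log (h z / h c) / d), ?_, by simp [hw0], ?_⟩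
  · have hlog : AnalyticAt ℂ (fun z => Complex.log (h z / h c)) c :=
      (analyticAt_clog (by simp [hc])).comp (hh.div analyticAt_const hc)
    exact analyticAt_const.mul (analyticAt_cexp.comp (hlog.div analyticAt_const hd'))
  · filter_upwards [hh.continuousAt.eventually_ne hc] with z hz
    rw [mul_pow, ← Complex.exp_nat_mul, mul_div_cancel₀ _ hd',
      Complex.exp_log (div_ne_zero hz hc), hw, mul_div_cancel₀ _ hc]

lemma AnalyticAt.exists_eventually_sub_eq_pow {f : ℂ → ℂ} {c : ℂ} (hf : AnalyticAt ℂ f c)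
    (hnc : ¬ ∀ᶠ z in 𝓝 c, f z = f c) (hd : deriv f c = 0) :
    ∃ d : ℕ, 2 ≤ d ∧ ∃ F : ℂ → ℂ, AnalyticAt ℂ F c ∧ F c = 0 ∧ deriv F c ≠ 0 ∧
      ∀ᶠ z in 𝓝 c, f z - f c = F z ^ d := by
  obtain ⟨d, hord⟩ : ∃ d : ℕ, analyticOrderAt (f · - f c) c = d := by
    obtain ⟨d, hd⟩ := ENat.ne_top_iff_exists.1 fun htop => hnc <| by
      filter_upwards [(analyticOrderAt_eq_top (f := (f · - f c))).1 htop] with z hz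
      using sub_eq_zero.1 hz
    exact ⟨d, hd.symm⟩
  have hd2 : 2 ≤ d := by
    have h1 : analyticOrderAt (deriv f) c ≠ 0 := analyticOrderAt_ne_zero.2 ⟨hf.deriv, hd⟩
    have h2 := hf.analyticOrderAt_deriv_add_one
    rw [hord] at h2
    have : (2 : ℕ∞) ≤ d := by
      rw [← h2, show (2 : ℕ∞) = 1 + 1 from rfl]
      gcongr
      exact Order.one_le_iff_ne_zero.2 h1
    exact_mod_cast this
  obtain ⟨h, hh, hhc, hfh⟩ := (hf.sub analyticAt_const).analyticOrderAt_eq_natCast.1 hord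
  obtain ⟨φ, hφ, hφc, hφh⟩ := hh.exists_eventually_pow_eq hhc (by omega : d ≠ 0)
  have hF : HasDerivAt (fun z => (z - c) * φ z) (φ c) c := by
    simpa using ((hasDerivAt_id c).sub_const c).fun_mul hφ.differentiableAt.hasDerivAt
  refine ⟨d, hd2, fun z => (z - c) * φ z, (analyticAt_id.sub analyticAt_const).mul hφ,
    by simp, hF.deriv ▸ hφc, ?_⟩
  filter_upwards [hfh, hφh] with z hz hφz
  rw [show f z - f c = (z - c) ^ d * h z from hz, mul_pow, hφz]

/-- Write `f - f c = F ^ d` with `F` a local coordinate; for a primitive `d`-th root of unity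
`ω`, the points `F⁻¹(t)` and `F⁻¹(ω t)` have the same image. -/
lemma AnalyticAt.not_injOn_of_deriv_eq_zero {f : ℂ → ℂ} {c : ℂ} {B : Set ℂ}
    (hf : AnalyticAt ℂ f c) (hnc : ¬ ∀ᶠ z in 𝓝 c, f z = f c) (hd : deriv f c = 0)
    (hB : B ∈ 𝓝 c) : ¬ InjOn f B := by
  intro hinj
  obtain ⟨d, hd2, F, hF, hFc, hF', hfF⟩ := hf.exists_eventually_sub_eq_pow hnc hd
  have hFopen : 𝓝 0 ≤ map F (𝓝 c) := by
    refine hFc ▸ hF.eventually_constant_or_nhds_le_map_nhds.resolve_left fun hconst => hF' ?_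
    have hconst' : F =ᶠ[𝓝 c] fun _ => F c := hconst
    rw [hconst'.deriv_eq, deriv_const]
  set W := {z | z ∈ B ∧ f z - f c = F z ^ d}
  have hW : F '' W ∈ 𝓝 0 := hFopen (image_mem_map (inter_mem hB hfF))
  set ω := Complex.exp (2 * Real.pi * Complex.I / d)
  have hω : IsPrimitiveRoot ω d := Complex.isPrimitiveRoot_exp d (by omega)
  have hω1 : ω ≠ 1 := hω.ne_one (by omega)
  have hωW : (ω * ·) ⁻¹' (F '' W) ∈ 𝓝 (0 : ℂ) :=
    (continuous_const_mul ω).continuousAt.preimage_mem_nhds (by rwa [mul_zero])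
  obtain ⟨t, ⟨⟨a, ha, rfl⟩, ⟨b, hb, hba⟩⟩, ht⟩ :=
    ((eventually_nhdsWithin_of_eventually_nhds (inter_mem hW hωW)).and
      (self_mem_nhdsWithin (s := {(0 : ℂ)}ᶜ))).exists
  have hab : a ≠ b := by
    rintro rfl
    exact hω1 (mul_right_cancel₀ ht (by rw [one_mul]; exact hba.symm))
  refine hab (hinj ha.1 hb.1 (sub_left_inj (a := f c).1 ?_))
  rw [ha.2, hb.2, hba, mul_pow, hω.pow_eq_one, one_mul]

namespace Setup

variable (S : Setup)

lemma U_subset_V : S.U ⊆ S.V := subset_closure.trans S.hUV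

lemma isBounded_V : Bornology.IsBounded S.V := by
  have hV : S.V ⊆ ⋃ C ∈ {C | ∃ x ∈ S.V, C = connectedComponentIn S.V x}, C := fun x hx =>
    mem_iUnion₂.2 ⟨_, ⟨x, hx, rfl⟩, mem_connectedComponentIn hx⟩
  refine ((Bornology.isBounded_biUnion S.hV_comp_finite).2 ?_).subset hV
  rintro _ ⟨x, hx, rfl⟩
  exact (S.hV_jordan x hx).2.2.1

lemma isCompact_closure_U : IsCompact (closure S.U) :=
  (S.isBounded_V.subset S.U_subset_V).isCompact_closure

lemma continuousOn : ContinuousOn S.f S.U := S.hf_holo.continuousOn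

lemma analyticOnNhd : AnalyticOnNhd ℂ S.f S.U := S.hf_holo.analyticOnNhd S.hU_open

lemma preV_subset_U {n : ℕ} (hn : 1 ≤ n) : S.preV n ⊆ S.U := by
  obtain ⟨m, rfl⟩ := Nat.exists_eq_add_of_le' hn
  exact inter_subset_left

lemma preV_succ_subset (n : ℕ) : S.preV (n + 1) ⊆ S.preV n := by
  induction n with
  | zero => exact fun x hx => S.U_subset_V hx.1
  | succ n ih => exact fun x hx => ⟨hx.1, ih hx.2⟩

lemma preV_antitone : Antitone S.preV := antitone_nat_of_succ_le S.preV_succ_subset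

lemma isOpen_preV (n : ℕ) : IsOpen (S.preV n) := by
  induction n with
  | zero => exact S.hV_open
  | succ n ih => exact S.continuousOn.isOpen_inter_preimage S.hU_open ih

lemma continuousOn_iterate (r : ℕ) : ContinuousOn S.f^[r] (S.preV r) := by
  induction r with
  | zero => exact continuousOn_id
  | succ r ih =>
    rw [iterate_succ]
    exact ih.comp (S.continuousOn.mono inter_subset_left) fun x hx => hx.2

lemma closure_preV_succ (n : ℕ) :
    IsCompact (closure (S.preV (n + 1))) ∧ closure (S.preV (n + 1)) ⊆ S.preV n := by
  induction n with
  | zero =>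
    have hcl : closure (S.preV 1) ⊆ closure S.U := closure_mono inter_subset_left
    exact ⟨S.isCompact_closure_U.of_isClosed_subset isClosed_closure hcl, hcl.trans S.hUV⟩
  | succ n ih =>
    have hT : IsCompact (S.U ∩ S.f ⁻¹' closure (S.preV (n + 1))) :=
      S.hf_proper _ (ih.2.trans (S.preV_antitone n.zero_le)) ih.1
    have hcl : closure (S.preV (n + 2)) ⊆ S.U ∩ S.f ⁻¹' closure (S.preV (n + 1)) :=
      closure_minimal (fun x hx => ⟨hx.1, subset_closure hx.2⟩) hT.isClosed
    exact ⟨hT.of_isClosed_subset isClosed_closure hcl, fun x hx => ⟨(hcl hx).1, ih.2 (hcl hx).2⟩⟩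

lemma iterate_mem_K {z : ℂ} (hz : z ∈ S.K) (j : ℕ) : S.f^[j] z ∈ S.K :=
  ⟨hz.2 j, fun n => by rw [← iterate_add_apply]; exact hz.2 (n + j)⟩

lemma crit_subset_K : S.Crit ⊆ S.K := fun c hc => ⟨hc.1, S.hf_crit c hc.1 hc.2⟩

lemma K_subset_preV (n : ℕ) : S.K ⊆ S.preV n := by
  induction n with
  | zero => exact fun z hz => S.U_subset_V hz.1
  | succ n ih => exact fun z hz => ⟨hz.1, ih (by simpa using S.iterate_mem_K hz 1)⟩

lemma mem_K_of_forall_mem_preV {z : ℂ} (hz : ∀ n, z ∈ S.preV n) : z ∈ S.K := by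
  have key : ∀ n w, w ∈ S.preV (n + 1) → S.f^[n] w ∈ S.U := by
    intro n
    induction n with
    | zero => exact fun w hw => hw.1
    | succ n ih => exact fun w hw => by rw [iterate_succ_apply]; exact ih _ hw.2
  exact ⟨(hz 1).1, fun n => key n z (hz (n + 1))⟩

lemma isOpen_piece (n : ℕ) (x : ℂ) : IsOpen (S.piece n x) :=
  (S.isOpen_preV n).connectedComponentIn

lemma isPreconnected_piece (n : ℕ) (x : ℂ) : IsPreconnected (S.piece n x) :=
  isPreconnected_connectedComponentIn

lemma piece_subset_preV (n : ℕ) (x : ℂ) : S.piece n x ⊆ S.preV n :=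
  connectedComponentIn_subset _ _

lemma mem_piece {n : ℕ} {x : ℂ} (hx : x ∈ S.preV n) : x ∈ S.piece n x :=
  mem_connectedComponentIn hx

lemma piece_anti {m n : ℕ} (h : n ≤ m) (x : ℂ) : S.piece m x ⊆ S.piece n x :=
  connectedComponentIn_mono x (S.preV_antitone h)

lemma isCompact_closure_piece_succ (n : ℕ) (x : ℂ) : IsCompact (closure (S.piece (n + 1) x)) :=
  (S.closure_preV_succ n).1.of_isClosed_subset isClosed_closure
    (closure_mono (S.piece_subset_preV _ _))

lemma closure_piece_succ_subset {n : ℕ} {x : ℂ} (hx : x ∈ S.preV (n + 1)) :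
    closure (S.piece (n + 1) x) ⊆ S.piece n x :=
  (S.isPreconnected_piece _ x).closure.subset_connectedComponentIn
    (subset_closure (S.mem_piece hx))
    ((closure_mono (S.piece_subset_preV _ _)).trans (S.closure_preV_succ n).2)

/-- Otherwise `f` would be constant on the component of `U` containing `z`, which would then be
compact by properness and clopen in `ℂ`. -/
lemma not_eventually_eq {z : ℂ} (hz : z ∈ S.U) : ¬ ∀ᶠ w in 𝓝 z, S.f w = S.f z := by
  intro hev
  set C := connectedComponentIn S.U z
  have hCU : C ⊆ S.U := connectedComponentIn_subset _ _
  have hzC : z ∈ C := mem_connectedComponentIn hz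
  have hfC : EqOn S.f (fun _ => S.f z) C :=
    (S.analyticOnNhd.mono hCU).eqOn_of_preconnected_of_eventuallyEq analyticOnNhd_const
      isPreconnected_connectedComponentIn hzC hev
  have hT : IsCompact (S.U ∩ S.f ⁻¹' {S.f z}) :=
    S.hf_proper _ (singleton_subset_iff.2 (S.hf_maps hz)) isCompact_singleton
  have hCT : C ⊆ S.U ∩ S.f ⁻¹' {S.f z} := fun w hw => ⟨hCU hw, hfC hw⟩
  have hC : IsClosed C := isClosed_of_closure_subset <|
    isPreconnected_connectedComponentIn.closure.subset_connectedComponentIn (subset_closure hzC)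
      ((closure_minimal hCT hT.isClosed).trans inter_subset_left)
  have hCuniv : C = univ := IsClopen.eq_univ ⟨hC, S.hU_open.connectedComponentIn⟩ ⟨z, hzC⟩
  exact noncompact_univ ℂ (hCuniv ▸ hT.of_isClosed_subset hC hCT)

lemma isOpen_image {Q : Set ℂ} (hQ : IsOpen Q) (hQU : Q ⊆ S.U) : IsOpen (S.f '' Q) := by
  rw [isOpen_iff_mem_nhds]
  rintro _ ⟨w, hw, rfl⟩
  exact ((S.analyticOnNhd w (hQU hw)).eventually_constant_or_nhds_le_map_nhds.resolve_left
    (S.not_eventually_eq (hQU hw))) (image_mem_map (hQ.mem_nhds hw))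

/-- `f(P_{n+1}(x))` is open and, by compactness of `closure P_{n+1}(x) ⊆ U`, relatively closed
in the connected piece `P_n(f x)`. -/
lemma image_piece_succ {n : ℕ} (hn : 1 ≤ n) {x : ℂ} (hx : x ∈ S.preV (n + 1)) :
    S.f '' S.piece (n + 1) x = S.piece n (S.f x) := by
  set Q := S.piece (n + 1) x
  have hxQ : x ∈ Q := S.mem_piece hx
  have hQU : Q ⊆ S.U := (S.piece_subset_preV _ _).trans inter_subset_left
  have hclQ : closure Q ⊆ S.preV n :=
    (closure_mono (S.piece_subset_preV _ _)).trans (S.closure_preV_succ n).2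
  have hsub : S.f '' Q ⊆ S.piece n (S.f x) :=
    ((S.isPreconnected_piece _ _).image _ (S.continuousOn.mono hQU)).subset_connectedComponentIn
      (mem_image_of_mem _ hxQ) (image_subset_iff.2 fun w hw => (S.piece_subset_preV _ _ hw).2)
  refine hsub.antisymm ((S.isPreconnected_piece _ _).subset_of_closure_inter_subset
    (S.isOpen_image (S.isOpen_piece _ _) hQU) ⟨S.f x, hsub ⟨x, hxQ, rfl⟩, x, hxQ, rfl⟩ ?_)
  rintro _ ⟨hy, hyP⟩
  have hcont : ContinuousOn S.f (closure Q) :=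
    S.continuousOn.mono (hclQ.trans (S.preV_subset_U hn))
  obtain ⟨w, hw, rfl⟩ := closure_minimal (image_mono subset_closure)
    ((S.isCompact_closure_piece_succ n x).image_of_continuousOn hcont).isClosed hy
  exact ⟨w, (S.isOpen_preV _).mem_connectedComponentIn_of_mem_closure hw
    ⟨S.preV_subset_U hn (hclQ hw), S.piece_subset_preV _ _ hyP⟩, rfl⟩

lemma image_iterate_piece {n : ℕ} (hn : 1 ≤ n) (r : ℕ) {x : ℂ} (hx : x ∈ S.preV (n + r)) :
    S.f^[r] '' S.piece (n + r) x = S.piece n (S.f^[r] x) := by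
  induction r generalizing x with
  | zero => simp
  | succ r ih =>
    rw [iterate_succ, image_comp, ← add_assoc, S.image_piece_succ (n := n + r) (by omega) hx, ih hx.2]
    rfl

lemma Kcomp_subset_piece {z q y : ℂ} {n : ℕ} (hq : q ∈ S.Kcomp z) (hqy : q ∈ S.piece n y) :
    S.Kcomp z ⊆ S.piece n y := by
  rw [piece, connectedComponentIn_eq hqy]
  exact isPreconnected_connectedComponentIn.subset_connectedComponentIn hq
    ((connectedComponentIn_subset _ _).trans (S.K_subset_preV n))

lemma Kcomp_subset_piece_self {z : ℂ} (hz : z ∈ S.K) (n : ℕ) : S.Kcomp z ⊆ S.piece n z :=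
  S.Kcomp_subset_piece (mem_connectedComponentIn hz) (S.mem_piece (S.K_subset_preV n hz))

lemma iInter_closure_piece {z : ℂ} (hz : z ∈ S.K) (r : ℕ) :
    ⋂ n, closure (S.piece (n + 1 + r) z) = ⋂ n, S.piece n z := by
  refine subset_antisymm (subset_iInter fun n => (iInter_subset _ n).trans ?_)
    (subset_iInter fun n => (iInter_subset _ (n + 1 + r)).trans subset_closure)
  rw [add_right_comm]
  exact (S.closure_piece_succ_subset (S.K_subset_preV _ hz)).trans (S.piece_anti (by omega) z)

lemma Kcomp_eq_iInter_piece {z : ℂ} (hz : z ∈ S.K) : S.Kcomp z = ⋂ n, S.piece n z := by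
  refine (subset_iInter (S.Kcomp_subset_piece_self hz)).antisymm ?_
  have hconn : IsPreconnected (⋂ n, S.piece n z) := by
    rw [← S.iInter_closure_piece hz 0]
    exact isPreconnected_iInter_of_antitone
      (antitone_nat_of_succ_le fun n => closure_mono (S.piece_anti (by omega) z))
      (fun n => S.isCompact_closure_piece_succ _ z) fun n => (S.isPreconnected_piece _ _).closure
  exact hconn.subset_connectedComponentIn
    (mem_iInter.2 fun n => S.mem_piece (S.K_subset_preV n hz)) fun w hw =>
      S.mem_K_of_forall_mem_preV fun n => S.piece_subset_preV n z (mem_iInter.1 hw n)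

/-- `K_f(z)` is the decreasing intersection of the compact sets `closure P_{n+1+r}(z)`, and
`f^r` maps each of them between `P_{n+1}(f^r z)` and `P_n(f^r z)`. -/
lemma image_iterate_Kcomp {z : ℂ} (hz : z ∈ S.K) (r : ℕ) :
    S.f^[r] '' S.Kcomp z = S.Kcomp (S.f^[r] z) := by
  have hE : Antitone fun n => closure (S.piece (n + 1 + r) z) :=
    antitone_nat_of_succ_le fun n => closure_mono (S.piece_anti (by omega) z)
  have hcompact : ∀ n, IsCompact (closure (S.piece (n + 1 + r) z)) := fun n => by
    rw [add_right_comm]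
    exact S.isCompact_closure_piece_succ _ z
  have hcont : ∀ n, ContinuousOn S.f^[r] (closure (S.piece (n + 1 + r) z)) := by
    intro n
    refine (S.continuousOn_iterate r).mono ((closure_mono (S.piece_subset_preV _ _)).trans ?_)
    rw [add_right_comm]
    exact (S.closure_preV_succ (n + r)).2.trans (S.preV_antitone (by omega))
  have himg : ∀ n, S.f^[r] '' S.piece (n + 1 + r) z = S.piece (n + 1) (S.f^[r] z) := fun n =>
    S.image_iterate_piece (by omega) r (S.K_subset_preV _ hz)
  have hw : S.f^[r] z ∈ S.K := S.iterate_mem_K hz r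
  rw [S.Kcomp_eq_iInter_piece hz, ← S.iInter_closure_piece hz r, S.Kcomp_eq_iInter_piece hw,
    ContinuousOn.image_iInter_of_antitone (E := fun n => closure (S.piece (n + 1 + r) z)) hE
      hcompact (hcont 0)]
  refine subset_antisymm (subset_iInter fun n => (iInter_subset _ n).trans ?_)
    (subset_iInter fun n => (iInter_subset _ (n + 1)).trans ?_)
  · calc S.f^[r] '' closure (S.piece (n + 1 + r) z) ⊆ closure (S.f^[r] '' S.piece (n + 1 + r) z) := (hcont n).image_closure
      _ = closure (S.piece (n + 1) (S.f^[r] z)) := by rw [himg]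
      _ ⊆ S.piece n (S.f^[r] z) := S.closure_piece_succ_subset (S.K_subset_preV _ hw)
  · exact (himg n).symm.subset.trans (image_mono subset_closure)

/-- Critical points are zeros of `f'` in the compact set `U ∩ f⁻¹(closure U)`; infinitely many
would accumulate, forcing `f` to be locally constant there. -/
lemma finite_crit : S.Crit.Finite := by
  by_contra hinf
  have hT : IsCompact (S.U ∩ S.f ⁻¹' closure S.U) :=
    S.hf_proper _ S.hUV S.isCompact_closure_U
  obtain ⟨z, hzT, hz⟩ := Set.Infinite.exists_accPt_of_subset_isCompact hinf hT
    fun c hc => ⟨hc.1, subset_closure (by simpa using S.hf_crit c hc.1 hc.2 1)⟩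
  have hfz := S.analyticOnNhd z hzT.1
  exact S.not_eventually_eq hzT.1 (hfz.eventually_eq_of_eventually_deriv_eq_zero
    (hfz.deriv.frequently_zero_iff_eventually_zero.1
      ((accPt_iff_frequently_nhdsNE.1 hz).mono fun w hw => hw.2)))

end Setup

namespace Setup

variable {S : Setup}

/-- Otherwise `f` would be injective on the piece `P_{n+k-s}(f^s c₁)`, which contains `c`. -/
lemma IsChild.le_of_mem_image_Kcomp {c c₁ c' : ℂ} {k n s : ℕ} (hchild : S.IsChild c₁ k n c')
    (hc : c ∈ S.Crit) (hc₁ : c₁ ∈ S.K) (hs : 1 ≤ s) (hcs : c ∈ S.f^[s] '' S.Kcomp c₁) :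
    k ≤ s := by
  by_contra! hks
  obtain ⟨-, -, hinj, -⟩ := hchild
  set m := n + k - s
  have hfc₁ : S.f c₁ ∈ S.preV (m + (s - 1)) :=
    S.K_subset_preV _ (by simpa using S.iterate_mem_K hc₁ 1)
  have himg : S.f^[s - 1] '' S.piece (m + (s - 1)) (S.f c₁) = S.piece m (S.f^[s] c₁) := by
    rw [S.image_iterate_piece (by omega) (s - 1) hfc₁, ← iterate_succ_apply,
      Nat.succ_eq_add_one, Nat.sub_add_cancel hs]
  rw [show n + k - 1 = m + (s - 1) by omega, show k - 1 = k - 1 - s + (s - 1 + 1) by omega,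
    iterate_add, iterate_succ'] at hinj
  have hinjf : InjOn S.f (S.piece m (S.f^[s] c₁)) := himg ▸ hinj.of_comp.image_of_comp
  have hcP : c ∈ S.piece m (S.f^[s] c₁) := by
    rw [S.image_iterate_Kcomp hc₁] at hcs
    exact S.Kcomp_subset_piece_self (S.iterate_mem_K hc₁ s) m hcs
  exact (S.analyticOnNhd c hc.1).not_injOn_of_deriv_eq_zero (S.not_eventually_eq hc.1) hc.2
    ((S.isOpen_piece _ _).mem_nhds hcP) hinjf

section Periodic

variable {c : ℂ} {p : ℕ}

/-- Infinitely many of the returns `f^{j_n}(c) ∈ P_n(c')` have the same residue `r` mod `p`;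
they all lie in `K_f(f^r c)`, whose pieces therefore coincide with those of `c'`. -/
lemma exists_Kcomp_eq_image_of_acc (hcK : c ∈ S.K) (hp : 0 < p)
    (hper : IsPeriodicPt (image S.f) p (S.Kcomp c)) {c' : ℂ} (hc' : c' ∈ S.K) (hacc : S.Acc c c') :
    ∃ r < p, S.Kcomp c' = S.f^[r] '' S.Kcomp c := by
  choose j _ hj using hacc
  obtain ⟨r, hr⟩ := Finite.exists_infinite_fiber fun n => (⟨j n % p, Nat.mod_lt _ hp⟩ : Fin p)
  have hW : S.f^[r] '' S.Kcomp c = S.Kcomp (S.f^[r] c) := S.image_iterate_Kcomp hcK r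
  refine ⟨r, r.isLt, ?_⟩
  rw [hW]
  refine connectedComponentIn_eq (show S.f^[r] c ∈ S.Kcomp c' from ?_)
  rw [S.Kcomp_eq_iInter_piece hc', mem_iInter]
  intro N
  obtain ⟨m, hm, hNm⟩ := (Set.infinite_coe_iff.1 hr).exists_gt N
  have hmem : S.f^[j m] c ∈ S.Kcomp (S.f^[r] c) := by
    rw [← hW, ← congrArg Fin.val hm, image_iterate_mod_of_isPeriodicPt hper]
    exact mem_image_of_mem _ (mem_connectedComponentIn hcK)
  exact S.piece_anti hNm.le c' (S.Kcomp_subset_piece hmem (hj m)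
    (mem_connectedComponentIn (S.iterate_mem_K hcK r)))

lemma acc_of_Kcomp_eq_image (hcK : c ∈ S.K) (hper : IsPeriodicPt (image S.f) p (S.Kcomp c))
    {c' : ℂ} {r : ℕ} (hc' : c' ∈ S.K) (hr : r < p)
    (hK : S.Kcomp c' = S.f^[r] '' S.Kcomp c) : S.Acc c' c := by
  intro n
  refine ⟨p - r, by omega, S.Kcomp_subset_piece_self hcK n ?_⟩
  rw [← image_iterate_sub_of_isPeriodicPt hper hr.le, ← hK]
  exact mem_image_of_mem _ (mem_connectedComponentIn hc')

lemma acc_self (hcK : c ∈ S.K) (hp : 0 < p) (hper : IsPeriodicPt (image S.f) p (S.Kcomp c)) :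
    S.Acc c c :=
  acc_of_Kcomp_eq_image hcK hper hcK hp (by simp)

lemma persistentlyRecurrent (hc : c ∈ S.Crit) (hp : 0 < p)
    (hper : IsPeriodicPt (image S.f) p (S.Kcomp c)) : S.PersistentlyRecurrent c := by
  intro n c' _
  refine (((S.finite_crit.subset fun x (hx : x ∈ S.cls c) => hx.1).prod (finite_Iic p)).image
    fun q : ℂ × ℕ => S.piece (n + q.2) q.1).subset ?_
  rintro _ ⟨c₁, hc₁, k, hchild, rfl⟩
  refine ⟨(c₁, k), ⟨hc₁, mem_Iic.2 ?_⟩, rfl⟩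
  have hcK := S.crit_subset_K hc
  have hc₁K := S.crit_subset_K hc₁.1
  obtain ⟨r, hr, hK⟩ : ∃ r < p, S.Kcomp c₁ = S.f^[r] '' S.Kcomp c := by
    rcases hc₁.2 with rfl | ⟨hacc, -⟩
    · exact ⟨0, hp, by simp⟩
    · exact exists_Kcomp_eq_image_of_acc hcK hp hper hc₁K hacc
  have hcs : c ∈ S.f^[p - r] '' S.Kcomp c₁ := by
    rw [hK, image_iterate_sub_of_isPeriodicPt hper hr.le]
    exact mem_connectedComponentIn hcK
  exact (hchild.le_of_mem_image_Kcomp hc hc₁K (by omega) hcs).trans (Nat.sub_le p r)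

end Periodic

end Setup

theorem stmt_15_general (S : Setup)
    (c : ℂ) (hc : c ∈ S.Crit) (p : ℕ) (hp : 1 ≤ p)
    (hper : S.f^[p] '' S.Kcomp c = S.Kcomp c) :
    (∀ c' ∈ S.Crit, c' ∈ S.Forw c → ∀ i : ℕ,
      ∃ j < p, S.f^[i] '' S.Kcomp c' = S.f^[j] '' S.Kcomp c) ∧
    (∀ c' ∈ S.Crit, c' ∈ S.Forw c → c' ∈ S.cls c) ∧
    (S.Acc c c ∧ S.PersistentlyRecurrent c) := by
  have hcK : c ∈ S.K := S.crit_subset_K hc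
  have hper' : IsPeriodicPt (image S.f) p (S.Kcomp c) := by
    rwa [IsPeriodicPt, IsFixedPt, ← image_iterate_eq]
  refine ⟨fun c' _ hc' i => ?_, fun c' hc'C hc' => ?_,
    Setup.acc_self hcK hp hper', Setup.persistentlyRecurrent hc hp hper'⟩
  · obtain ⟨r, -, hK⟩ := Setup.exists_Kcomp_eq_image_of_acc hcK hp hper' hc'.1 hc'.2
    refine ⟨(i + r) % p, Nat.mod_lt _ hp, ?_⟩
    rw [hK, image_iterate_mod_of_isPeriodicPt hper', ← image_comp, ← iterate_add]
  · obtain ⟨r, hr, hK⟩ := Setup.exists_Kcomp_eq_image_of_acc hcK hp hper' hc'.1 hc'.2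
    exact ⟨hc'C, Or.inr ⟨hc'.2, Setup.acc_of_Kcomp_eq_image hcK hper' hc'.1 hr hK⟩⟩

/-- Let `c` be a critical point whose component `K_f(c)` is
periodic of period `p`. Then (1) for every critical `c' ∈ Forw(c)` and every
`i ≥ 0`, `f^i(K_f(c'))` belongs to the cycle `{K_f(c), …, f^{p-1}(K_f(c))}`;
(2) every critical point of `Forw(c)` lies in `[c]`; (3) `c → c` and `c` is
persistently recurrent. -/
theorem stmt_15 (S : Setup) (h1 : S.OneCritPerComp) (h2 : S.StarStar)
    (c : ℂ) (hc : c ∈ S.Crit) (p : ℕ) (hp : 1 ≤ p)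
    (hper : S.f^[p] '' S.Kcomp c = S.Kcomp c)
    (hmin : ∀ q, 1 ≤ q → q < p → S.f^[q] '' S.Kcomp c ≠ S.Kcomp c) :
    (∀ c' ∈ S.Crit, c' ∈ S.Forw c → ∀ i : ℕ,
      ∃ j < p, S.f^[i] '' S.Kcomp c' = S.f^[j] '' S.Kcomp c) ∧
    (∀ c' ∈ S.Crit, c' ∈ S.Forw c → c' ∈ S.cls c) ∧
    (S.Acc c c ∧ S.PersistentlyRecurrent c) :=
  stmt_15_general S c hc p hp hper
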